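/- Let K ≥ 1, α ≥ 0, and x ∈ ℝ^K with x_i > 0 and α x_i ≤ 1 for all i. Define H_α(y) = (∑_{j=1}^K y_j e^{-α y_j}) / (∑_{i=1}^K e^{-α y_i}) for y in a neighborhood of x. Then for every direction v ∈ ℝ^K, the second derivative at t = 0 of the function t ↦ H_α(x + t·v) is nonpositive; equivalently, the Hessian quadratic form of H_α at x satisfies vᵀ ∇²H_α(x) v ≤ 0 for all v ∈ ℝ^K. -/

import Mathlib

/-!
Write `E_y` for the average under the weights proportional to `exp (-α y_i)`, so that
`H_α y = E_y y`. Along a line `y = x + t v`, differentiating the weights gives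
`d/dt E_y[g] = E_y[g'] - α Cov_y(g, v)`. Applied twice, this gives, with `m = E_x v`, for the
second derivative at `t = 0` of `H_α (x + t v)`
`H'' = α² E_x[x (v - m)²] - (2α + α² E_x x) Var_x v`, and `α x_i ≤ 1` bounds the first term
by `α Var_x v`, so `H'' ≤ -(α + α² E_x x) Var_x v ≤ 0`.
-/

open Finset Real

lemma hasDerivAt_exp_neg_mul_affine (α a b t : ℝ) :
    HasDerivAt (fun s => exp (-α * (a + s * b))) (-α * b * exp (-α * (a + t * b))) t := by
  have := (((hasDerivAt_id t).mul_const b).const_add a).const_mul (-α) |>.exp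
  simpa [mul_comm, mul_left_comm] using this

lemma hasDerivAt_line_apply {ι : Type*} (x v : ι → ℝ) (i : ι) (t : ℝ) :
    HasDerivAt (fun s : ℝ => (x + s • v) i) (v i) t := by
  simpa using ((hasDerivAt_id t).mul_const (v i)).const_add (x i)

variable {ι : Type*} [Fintype ι]

/-- `H_α y = gibbsAvg α y y`. -/
noncomputable def gibbsAvg (α : ℝ) (y : ι → ℝ) : (ι → ℝ) →ₗ[ℝ] ℝ where
  toFun g := (∑ i, g i * exp (-α * y i)) / ∑ i, exp (-α * y i)
  map_add' g h := by simp only [Pi.add_apply, add_mul, sum_add_distrib, add_div]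
  map_smul' c g := by
    simp only [Pi.smul_apply, smul_eq_mul, mul_assoc, ← mul_sum, mul_div_assoc, RingHom.id_apply]

lemma gibbsAvg_apply (α : ℝ) (y g : ι → ℝ) :
    gibbsAvg α y g = (∑ i, g i * exp (-α * y i)) / ∑ i, exp (-α * y i) := rfl

lemma sum_exp_neg_mul_pos [Nonempty ι] (α : ℝ) (y : ι → ℝ) : 0 < ∑ i, exp (-α * y i) :=
  sum_pos (fun _ _ => exp_pos _) univ_nonempty

lemma gibbsAvg_one [Nonempty ι] (α : ℝ) (y : ι → ℝ) : gibbsAvg α y 1 = 1 := by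
  simp only [gibbsAvg_apply, Pi.one_apply, one_mul]
  exact div_self (sum_exp_neg_mul_pos α y).ne'

lemma gibbsAvg_nonneg (α : ℝ) (y : ι → ℝ) {g : ι → ℝ} (hg : 0 ≤ g) :
    0 ≤ gibbsAvg α y g :=
  div_nonneg (sum_nonneg fun i _ => mul_nonneg (hg i) (exp_pos _).le)
    (sum_nonneg fun _ _ => (exp_pos _).le)

lemma gibbsAvg_mono (α : ℝ) (y : ι → ℝ) {g h : ι → ℝ} (hgh : g ≤ h) :
    gibbsAvg α y g ≤ gibbsAvg α y h := by
  simpa using gibbsAvg_nonneg α y (sub_nonneg.2 hgh)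

lemma hasDerivAt_gibbsAvg_line [Nonempty ι] (α : ℝ) (x v : ι → ℝ) {g : ℝ → ι → ℝ}
    {g' : ι → ℝ} {t : ℝ} (hg : ∀ i, HasDerivAt (fun s => g s i) (g' i) t) :
    HasDerivAt (fun s => gibbsAvg α (x + s • v) (g s))
      (gibbsAvg α (x + t • v) g' - α * (gibbsAvg α (x + t • v) (g t * v)
        - gibbsAvg α (x + t • v) (g t) * gibbsAvg α (x + t • v) v)) t := by
  have hw (i : ι) := hasDerivAt_exp_neg_mul_affine α (x i) (v i) t
  have hN := HasDerivAt.fun_sum (u := univ) fun i _ => (hg i).fun_mul (hw i)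
  have hZ := HasDerivAt.fun_sum (u := univ) fun i _ => hw i
  have hZpos := sum_exp_neg_mul_pos α (x + t • v)
  refine (hN.fun_div hZ hZpos.ne').congr_deriv ?_
  simp only [gibbsAvg_apply, Pi.add_apply, Pi.smul_apply, Pi.mul_apply, smul_eq_mul]
    at hZpos ⊢
  rw [sum_add_distrib]
  simp only [mul_assoc, ← mul_sum, mul_left_comm (g t _)]
  field_simp
  ring

lemma hasDerivAt_gibbsAvg_line_self [Nonempty ι] (α : ℝ) (x v : ι → ℝ) (t : ℝ) :
    HasDerivAt (fun s : ℝ => gibbsAvg α (x + s • v) (x + s • v))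
      (gibbsAvg α (x + t • v) v - α * (gibbsAvg α (x + t • v) ((x + t • v) * v)
        - gibbsAvg α (x + t • v) (x + t • v) * gibbsAvg α (x + t • v) v)) t :=
  hasDerivAt_gibbsAvg_line α x v fun i => hasDerivAt_line_apply x v i t

lemma hasDerivAt_deriv_gibbsAvg_line_self [Nonempty ι] (α : ℝ) (x v : ι → ℝ) :
    HasDerivAt (deriv fun s : ℝ => gibbsAvg α (x + s • v) (x + s • v))
      (α ^ 2 * gibbsAvg α x (x * (v - fun _ => gibbsAvg α x v) ^ 2)
        - (2 * α + α ^ 2 * gibbsAvg α x x)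
          * gibbsAvg α x ((v - fun _ => gibbsAvg α x v) ^ 2)) 0 := by
  rw [funext_iff.2 fun t => (hasDerivAt_gibbsAvg_line_self α x v t).deriv]
  have hm := hasDerivAt_gibbsAvg_line α x v (g := fun _ => v) (g' := 0) (t := 0)
    fun i => hasDerivAt_const _ _
  have hxv := hasDerivAt_gibbsAvg_line α x v (g := fun s => (x + s • v) * v) (g' := v * v)
    fun i => (hasDerivAt_line_apply x v i 0).mul_const (v i)
  have hx := hasDerivAt_gibbsAvg_line_self α x v 0
  refine (hm.fun_sub ((hxv.fun_sub (hx.fun_mul hm)).const_mul α)).congr_deriv ?_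
  set E := gibbsAvg α x
  have hvar : E ((v - fun _ => E v) ^ 2) = E (v * v) - E v ^ 2 := by
    have hexpand : (v - fun _ => E v) ^ 2 = v * v - (2 * E v) • v + E v ^ 2 • 1 := by
      ext i
      simp only [Pi.pow_apply, Pi.sub_apply, Pi.add_apply, Pi.mul_apply, Pi.smul_apply,
        smul_eq_mul, Pi.one_apply]
      ring
    rw [hexpand, map_add, map_sub, map_smul, map_smul, gibbsAvg_one, smul_eq_mul, smul_eq_mul]
    ring
  have hxvar :
      E (x * (v - fun _ => E v) ^ 2) = E (x * v * v) - 2 * E v * E (x * v) + E v ^ 2 * E x := by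
    have hexpand :
        x * (v - fun _ => E v) ^ 2 = x * v * v - (2 * E v) • (x * v) + E v ^ 2 • x := by
      ext i
      simp only [Pi.mul_apply, Pi.pow_apply, Pi.sub_apply, Pi.add_apply, Pi.smul_apply,
        smul_eq_mul]
      ring
    rw [hexpand, map_add, map_sub, map_smul, map_smul, smul_eq_mul, smul_eq_mul]
  simp only [zero_smul, add_zero, map_zero]
  rw [hvar, hxvar]
  ring

lemma gibbsAvg_second_variation_nonpos (α : ℝ) (x v : ι → ℝ) (hα : 0 ≤ α) (hx : 0 ≤ x)
    (hαx : ∀ i, α * x i ≤ 1) :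
    α ^ 2 * gibbsAvg α x (x * (v - fun _ => gibbsAvg α x v) ^ 2)
      - (2 * α + α ^ 2 * gibbsAvg α x x)
        * gibbsAvg α x ((v - fun _ => gibbsAvg α x v) ^ 2) ≤ 0 := by
  set E := gibbsAvg α x
  set c := v - fun _ => E v
  have hvar : 0 ≤ E (c ^ 2) := gibbsAvg_nonneg α x fun i => sq_nonneg (c i)
  have hEx : 0 ≤ E x := gibbsAvg_nonneg α x hx
  have hweighted : α * E (x * c ^ 2) ≤ E (c ^ 2) := by
    rw [← smul_eq_mul, ← map_smul]
    refine gibbsAvg_mono α x fun i => ?_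
    simpa [mul_assoc] using mul_le_of_le_one_left (sq_nonneg (c i)) (hαx i)
  nlinarith [mul_le_mul_of_nonneg_left hweighted hα, mul_nonneg hα hvar,
    mul_nonneg (mul_nonneg (sq_nonneg α) hEx) hvar]

/-- Key step of Lemma 1: at any point `x` with `0 < x_i` and `α x_i ≤ 1` for all `i`,
the second derivative at `t = 0` of `t ↦ H_α(x + t v)` is nonpositive for every
direction `v`, i.e. the Hessian quadratic form of `H_α` at `x` is negative
semidefinite. -/
theorem stmt_3 (K : ℕ) (hK : 1 ≤ K) (α : ℝ) (hα : 0 ≤ α)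
    (x : Fin K → ℝ) (hx : ∀ i, 0 < x i ∧ α * x i ≤ 1)
    (v : Fin K → ℝ) :
    deriv (deriv (fun t : ℝ =>
        (∑ j, (x j + t * v j) * Real.exp (-α * (x j + t * v j)))
          / (∑ i, Real.exp (-α * (x i + t * v i))))) 0 ≤ 0 := by
  have : Nonempty (Fin K) := ⟨⟨0, hK⟩⟩
  show deriv (deriv fun s : ℝ => gibbsAvg α (x + s • v) (x + s • v)) 0 ≤ 0
  rw [(hasDerivAt_deriv_gibbsAvg_line_self α x v).deriv]
  exact gibbsAvg_second_variation_nonpos α x v hα (fun i => (hx i).1.le) fun i => (hx i).2
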